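/- (Strict policy improvement.) Let μ and μ' be stationary deterministic policies such that T_{μ'} J_μ = T J_μ. If J_μ ≠ J*, then J_{μ'} ≤ J_μ pointwise and J_{μ'} ≠ J_μ, i.e., the policy improvement step produces a strictly better policy whenever μ is not optimal. -/

import Mathlib

/-!
A policy value `J_μ` is the fixed point of the affine map `T_μ J = g_μ + α P_μ J`, and `P_μ` is
row-stochastic, so by a minimum principle (at a minimum `m` of `u`, `α • P u ≤ u` forces
`α m ≤ m`) the inequality `T_μ J ≤ J` implies `J_μ ≤ J`, and `J ≤ T_μ J` implies `J ≤ J_μ`.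
Applied to `μ'` and `J = J_μ`, greediness gives `T_{μ'} J_μ = T J_μ ≤ T_μ J_μ = J_μ`, hence
`J_{μ'} ≤ J_μ`. If `J_{μ'} = J_μ`, then `T J_μ = T_{μ'} J_{μ'} = J_μ`; but a fixed point of `T`
lies below every policy value and equals the value of a policy greedy for it, so `T` has only
one fixed point and `J_μ = J*`.
-/

/-- The Bellman operator `T` of the finite discounted MDP. -/
noncomputable def Tbell {S A : Type*} [Fintype S] [Fintype A] [Nonempty A]
    (P : S → A → S → ℝ) (g : S → A → ℝ) (α : ℝ) (J : S → ℝ) : S → ℝ :=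
  fun x => Finset.univ.inf' Finset.univ_nonempty
    (fun a : A => g x a + α * ∑ y, P x a y * J y)

/-- The one-stage DP operator `T_μ` for a stationary deterministic policy `μ`. -/
noncomputable def Tpol {S A : Type*} [Fintype S]
    (P : S → A → S → ℝ) (g : S → A → ℝ) (α : ℝ) (μ : S → A) (J : S → ℝ) : S → ℝ :=
  fun x => g x (μ x) + α * ∑ y, P x (μ x) y * J y

/-- The transition matrix `P_μ` of a stationary deterministic policy `μ`. -/
def Pmat {S A : Type*} (P : S → A → S → ℝ) (μ : S → A) : Matrix S S ℝ :=
  fun x y => P x (μ x) y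

/-- The stage-cost vector `g_μ` of a stationary deterministic policy `μ`. -/
def gvec {S A : Type*} (g : S → A → ℝ) (μ : S → A) : S → ℝ :=
  fun x => g x (μ x)

/-- The value function `J_μ(x) = ∑_{t} α^t (P_μ^t g_μ)(x)` of policy `μ`. -/
noncomputable def Jval {S A : Type*} [Fintype S] [DecidableEq S]
    (P : S → A → S → ℝ) (g : S → A → ℝ) (α : ℝ) (μ : S → A) : S → ℝ :=
  fun x => ∑' t : ℕ, α ^ t * ((Pmat P μ ^ t).mulVec (gvec g μ)) x

open Finset Matrix

namespace Matrix

variable {n : Type*} [Fintype n] [DecidableEq n] {M : Matrix n n ℝ}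

theorem norm_mulVec_le_of_mem_rowStochastic (hM : M ∈ rowStochastic ℝ n) (v : n → ℝ) :
    ‖M *ᵥ v‖ ≤ ‖v‖ := by
  refine (pi_norm_le_iff_of_nonneg (norm_nonneg v)).2 fun i => ?_
  calc ‖(M *ᵥ v) i‖ ≤ ∑ j, ‖M i j * v j‖ := norm_sum_le _ _
    _ ≤ ∑ j, M i j * ‖v‖ := sum_le_sum fun j _ => by
        rw [norm_mul, Real.norm_of_nonneg (nonneg_of_mem_rowStochastic hM)]
        exact mul_le_mul_of_nonneg_left (norm_le_pi_norm v j) (nonneg_of_mem_rowStochastic hM)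
    _ = ‖v‖ := by rw [← sum_mul, sum_row_of_mem_rowStochastic hM, one_mul]

theorem nonneg_of_smul_mulVec_le {α : ℝ} (hM : M ∈ rowStochastic ℝ n) (hα0 : 0 ≤ α)
    (hα1 : α < 1) {u : n → ℝ} (h : α • (M *ᵥ u) ≤ u) : 0 ≤ u := by
  intro x
  have : Nonempty n := ⟨x⟩
  obtain ⟨x₀, hx₀⟩ := Finite.exists_min u
  have hmin : u x₀ ≤ (M *ᵥ u) x₀ :=
    calc u x₀ = ∑ y, M x₀ y * u x₀ := by rw [← sum_mul, sum_row_of_mem_rowStochastic hM, one_mul]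
      _ ≤ ∑ y, M x₀ y * u y :=
        sum_le_sum fun y _ => mul_le_mul_of_nonneg_left (hx₀ y) (nonneg_of_mem_rowStochastic hM)
  have hx₀' : α * (M *ᵥ u) x₀ ≤ u x₀ := h x₀
  have : 0 ≤ u x₀ := by nlinarith [mul_le_mul_of_nonneg_left hmin hα0]
  exact this.trans (hx₀ x)

end Matrix

section Policy

variable {S A : Type*} [Fintype S] {P : S → A → S → ℝ} {g : S → A → ℝ} {α : ℝ}

theorem Tpol_eq (μ : S → A) (J : S → ℝ) :
    Tpol P g α μ J = gvec g μ + α • (Pmat P μ *ᵥ J) :=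
  rfl

theorem Tpol_sub_Tpol (μ : S → A) (J J' : S → ℝ) :
    Tpol P g α μ J - Tpol P g α μ J' = α • (Pmat P μ *ᵥ (J - J')) := by
  rw [Tpol_eq, Tpol_eq, mulVec_sub, smul_sub, add_sub_add_left_eq_sub]

variable [DecidableEq S]

theorem Pmat_mem_rowStochastic (hP0 : ∀ x a y, 0 ≤ P x a y) (hP1 : ∀ x a, ∑ y, P x a y = 1)
    (μ : S → A) : Pmat P μ ∈ rowStochastic ℝ S :=
  mem_rowStochastic_iff_sum.2 ⟨fun x y => hP0 x (μ x) y, fun x => hP1 x (μ x)⟩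

variable {μ : S → A}

theorem hasSum_Jval (hP : Pmat P μ ∈ rowStochastic ℝ S) (hα0 : 0 ≤ α) (hα1 : α < 1) :
    HasSum (fun t : ℕ => α ^ t • (Pmat P μ ^ t *ᵥ gvec g μ)) (Jval P g α μ) := by
  have hs : Summable fun t : ℕ => α ^ t • (Pmat P μ ^ t *ᵥ gvec g μ) := by
    refine .of_norm_bounded
      ((summable_geometric_of_lt_one hα0 hα1).mul_right ‖gvec g μ‖) fun t => ?_
    rw [norm_smul, Real.norm_of_nonneg (pow_nonneg hα0 t)]
    exact mul_le_mul_of_nonneg_left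
      (norm_mulVec_le_of_mem_rowStochastic (pow_mem hP t) _) (pow_nonneg hα0 t)
  convert hs.hasSum using 1
  funext x
  exact (tsum_apply hs).symm

theorem Tpol_Jval (hP : Pmat P μ ∈ rowStochastic ℝ S) (hα0 : 0 ≤ α) (hα1 : α < 1) :
    Tpol P g α μ (Jval P g α μ) = Jval P g α μ := by
  have h := hasSum_Jval (g := g) hP hα0 hα1
  -- the tail of the series from `t = 1` is `α • P_μ` applied to the whole series
  have hshift := (hasSum_nat_add_iff' 1).2 h
  have hmap := (h.map (Pmat P μ).mulVecLin
    (LinearMap.continuous_of_finiteDimensional _)).const_smul α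
  have hterm : ∀ t : ℕ, α ^ (t + 1) • (Pmat P μ ^ (t + 1) *ᵥ gvec g μ)
      = α • (Pmat P μ *ᵥ (α ^ t • (Pmat P μ ^ t *ᵥ gvec g μ))) := fun t => by
    rw [pow_succ', pow_succ', ← mulVec_mulVec, mulVec_smul, smul_smul]
  simp only [hterm, sum_range_one, pow_zero, one_smul, one_mulVec] at hshift
  have hfix : α • (Pmat P μ *ᵥ Jval P g α μ) = Jval P g α μ - gvec g μ := hmap.unique hshift
  rw [Tpol_eq, hfix, add_sub_cancel]

theorem Jval_le_of_Tpol_le (hP : Pmat P μ ∈ rowStochastic ℝ S) (hα0 : 0 ≤ α) (hα1 : α < 1)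
    {J : S → ℝ} (h : Tpol P g α μ J ≤ J) : Jval P g α μ ≤ J := by
  refine sub_nonneg.1 (nonneg_of_smul_mulVec_le hP hα0 hα1 ?_)
  rw [← Tpol_sub_Tpol, Tpol_Jval hP hα0 hα1]
  exact sub_le_sub_right h _

theorem le_Jval_of_le_Tpol (hP : Pmat P μ ∈ rowStochastic ℝ S) (hα0 : 0 ≤ α) (hα1 : α < 1)
    {J : S → ℝ} (h : J ≤ Tpol P g α μ J) : J ≤ Jval P g α μ := by
  refine sub_nonneg.1 (nonneg_of_smul_mulVec_le hP hα0 hα1 ?_)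
  rw [← Tpol_sub_Tpol, Tpol_Jval hP hα0 hα1]
  exact sub_le_sub_left h _

end Policy

section Bellman

variable {S A : Type*} [Fintype S] [Fintype A] [Nonempty A]
  {P : S → A → S → ℝ} {g : S → A → ℝ} {α : ℝ}

theorem Tbell_le_Tpol (μ : S → A) (J : S → ℝ) : Tbell P g α J ≤ Tpol P g α μ J :=
  fun x => inf'_le _ (mem_univ (μ x))

theorem exists_Tpol_eq_Tbell (J : S → ℝ) : ∃ μ : S → A, Tpol P g α μ J = Tbell P g α J := by
  choose μ _ hμ using fun x =>
    exists_mem_eq_inf' univ_nonempty fun a : A => g x a + α * ∑ y, P x a y * J y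
  exact ⟨μ, funext fun x => (hμ x).symm⟩

theorem le_of_Tbell_fixed [DecidableEq S] (hP0 : ∀ x a y, 0 ≤ P x a y)
    (hP1 : ∀ x a, ∑ y, P x a y = 1) (hα0 : 0 ≤ α) (hα1 : α < 1) {J J' : S → ℝ}
    (hJ : Tbell P g α J = J) (hJ' : Tbell P g α J' = J') : J ≤ J' := by
  obtain ⟨μ, hμ⟩ := exists_Tpol_eq_Tbell (P := P) (g := g) (α := α) J'
  have hP := Pmat_mem_rowStochastic hP0 hP1 μ
  calc J ≤ Jval P g α μ :=
        le_Jval_of_le_Tpol hP hα0 hα1 (hJ.symm.trans_le (Tbell_le_Tpol μ J))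
    _ ≤ J' := Jval_le_of_Tpol_le hP hα0 hα1 (by rw [hμ, hJ'])

theorem Tbell_fixed_unique [DecidableEq S] (hP0 : ∀ x a y, 0 ≤ P x a y)
    (hP1 : ∀ x a, ∑ y, P x a y = 1) (hα0 : 0 ≤ α) (hα1 : α < 1) {J J' : S → ℝ}
    (hJ : Tbell P g α J = J) (hJ' : Tbell P g α J' = J') : J = J' :=
  le_antisymm (le_of_Tbell_fixed hP0 hP1 hα0 hα1 hJ hJ')
    (le_of_Tbell_fixed hP0 hP1 hα0 hα1 hJ' hJ)

end Bellman

theorem stmt_13_general {S A : Type*} [Fintype S] [DecidableEq S] [Fintype A] [Nonempty A]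
    (P : S → A → S → ℝ) (g : S → A → ℝ) (α : ℝ)
    (hP0 : ∀ x a y, 0 ≤ P x a y) (hP1 : ∀ x a, ∑ y, P x a y = 1)
    (hα0 : 0 < α) (hα1 : α < 1)
    (Jstar : S → ℝ) (hJstar : Tbell P g α Jstar = Jstar)
    (μ μ' : S → A)
    (hgreedy : Tpol P g α μ' (Jval P g α μ) = Tbell P g α (Jval P g α μ))
    (hnotopt : Jval P g α μ ≠ Jstar) :
    (∀ x : S, Jval P g α μ' x ≤ Jval P g α μ x) ∧ Jval P g α μ' ≠ Jval P g α μ := by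
  have hP := Pmat_mem_rowStochastic hP0 hP1
  have hle : Jval P g α μ' ≤ Jval P g α μ := by
    refine Jval_le_of_Tpol_le (hP μ') hα0.le hα1 ?_
    calc Tpol P g α μ' (Jval P g α μ) = Tbell P g α (Jval P g α μ) := hgreedy
      _ ≤ Tpol P g α μ (Jval P g α μ) := Tbell_le_Tpol μ _
      _ = Jval P g α μ := Tpol_Jval (hP μ) hα0.le hα1
  refine ⟨hle, fun heq => hnotopt (Tbell_fixed_unique hP0 hP1 hα0.le hα1 ?_ hJstar)⟩
  rw [← hgreedy, ← heq]
  exact Tpol_Jval (hP μ') hα0.le hα1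

theorem stmt_13 {S A : Type*} [Fintype S] [Nonempty S] [DecidableEq S] [Fintype A] [Nonempty A]
    (P : S → A → S → ℝ) (g : S → A → ℝ) (α : ℝ)
    (hP0 : ∀ x a y, 0 ≤ P x a y) (hP1 : ∀ x a, ∑ y, P x a y = 1)
    (hα0 : 0 < α) (hα1 : α < 1)
    (Jstar : S → ℝ) (hJstar : Tbell P g α Jstar = Jstar)
    (μ μ' : S → A)
    (hgreedy : Tpol P g α μ' (Jval P g α μ) = Tbell P g α (Jval P g α μ))
    (hnotopt : Jval P g α μ ≠ Jstar) :
    (∀ x : S, Jval P g α μ' x ≤ Jval P g α μ x) ∧ Jval P g α μ' ≠ Jval P g α μ :=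
  stmt_13_general P g α hP0 hP1 hα0 hα1 Jstar hJstar μ μ' hgreedy hnotopt
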